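/- Every weakly closed finite simple graph G is perfect: for every subset W of the vertex set of G, the chromatic number of the induced subgraph G[W] equals the clique number of G[W]. -/

import Mathlib

/-!
The weak closedness condition says exactly that `x ≺ y :↔ σ x < σ y ∧ ¬ G.Adj x y` is
transitive, so every induced subgraph of `G` is the incomparability graph of a finite partial
order: its cliques are the antichains, and a partition into chains is a proper colouring.
Perfectness is therefore Dilworth's theorem, which has a short proof due to Galvin. Remove a
maximal element `a`, partition the rest into `d = width` chains, and in the `i`-th chain take
the top `xᵢ`, the largest element lying on a maximum antichain; every maximum antichain meets
the `i`-th chain below `xᵢ`. If `xᵢ ≤ a` for some `i`, removing `a` together with the part of the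
`i`-th chain below `xᵢ` lowers the width, and induction applies. Otherwise `a` and the tops
form an antichain of size `d + 1`, and `{a}` is the new chain.
-/

/-- `G` is weakly closed: some labeling of the vertices by `1, …, n` is such that for
every edge `{i, j}` with `i < j` and every `i < k < j`, `{i,k} ∈ E(G)` or `{k,j} ∈ E(G)`. -/
def WeaklyClosed {V : Type*} [Fintype V] (G : SimpleGraph V) : Prop :=
  ∃ σ : V ≃ Fin (Fintype.card V), ∀ i j k : V,
    G.Adj i j → σ i < σ k → σ k < σ j → G.Adj i k ∨ G.Adj k j

open Finset

namespace Finset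

variable {α : Type*} [PartialOrder α]

open Classical in
noncomputable def width (S : Finset α) : ℕ :=
  (S.powerset.filter fun T : Finset α => IsAntichain (· ≤ ·) (T : Set α)).sup card

def IsMaximumAntichain (S T : Finset α) : Prop :=
  T ⊆ S ∧ IsAntichain (· ≤ ·) (T : Set α) ∧ #T = S.width

structure IsChainColoring (S : Finset α) (c : α → ℕ) (k : ℕ) : Prop where
  lt : ∀ a ∈ S, c a < k
  comparable : ∀ a ∈ S, ∀ b ∈ S, c a = c b → a ≤ b ∨ b ≤ a

variable {S T R : Finset α} {c : α → ℕ} {k : ℕ}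

theorem card_le_width (hTS : T ⊆ S) (hT : IsAntichain (· ≤ ·) (T : Set α)) : #T ≤ S.width := by
  classical
  exact le_sup (mem_filter.2 ⟨mem_powerset.2 hTS, hT⟩)

theorem exists_isMaximumAntichain (S : Finset α) : ∃ T, S.IsMaximumAntichain T := by
  classical
  obtain ⟨T, hT, hsup⟩ := exists_mem_eq_sup
    (S.powerset.filter fun T : Finset α => IsAntichain (· ≤ ·) (T : Set α))
    ⟨∅, mem_filter.2 ⟨empty_mem_powerset S, by rw [coe_empty]; exact .empty⟩⟩ card
  obtain ⟨hTS, hTanti⟩ := mem_filter.1 hT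
  exact ⟨T, mem_powerset.1 hTS, hTanti, hsup.symm⟩

theorem width_mono (h : S ⊆ R) : S.width ≤ R.width := by
  obtain ⟨T, hTS, hT, hcard⟩ := exists_isMaximumAntichain S
  exact hcard ▸ card_le_width (hTS.trans h) hT

theorem IsMaximumAntichain.of_subset (hT : R.IsMaximumAntichain T) (hRS : R ⊆ S)
    (hwidth : R.width = S.width) : S.IsMaximumAntichain T :=
  ⟨hT.1.trans hRS, hT.2.1, hT.2.2.trans hwidth⟩

namespace IsChainColoring

theorem mono (hc : S.IsChainColoring c k) {k' : ℕ} (hk : k ≤ k') : S.IsChainColoring c k' :=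
  ⟨fun a ha => (hc.lt a ha).trans_le hk, hc.comparable⟩

theorem of_sdiff_of_isChain [DecidableEq α] {K : Finset α} (hc : (S \ K).IsChainColoring c k)
    (hK : IsChain (· ≤ ·) (K : Set α)) :
    S.IsChainColoring (fun a => if a ∈ K then k else c a) (k + 1) := by
  constructor
  · intro a ha
    split_ifs with haK
    · exact k.lt_succ_self
    · exact (hc.lt a (mem_sdiff.2 ⟨ha, haK⟩)).trans k.lt_succ_self
  · intro a ha b hb hab
    have hlt := fun x hx hxK => hc.lt x (mem_sdiff.2 ⟨hx, hxK⟩)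
    by_cases haK : a ∈ K <;> by_cases hbK : b ∈ K <;> simp only [haK, hbK, if_true, if_false] at hab
    · exact hK.total haK hbK
    · exact absurd hab (hlt b hb hbK).ne'
    · exact absurd hab (hlt a ha haK).ne
    · exact hc.comparable a (mem_sdiff.2 ⟨ha, haK⟩) b (mem_sdiff.2 ⟨hb, hbK⟩) hab

theorem injOn_of_isAntichain (hc : S.IsChainColoring c k) (hTS : T ⊆ S)
    (hT : IsAntichain (· ≤ ·) (T : Set α)) : Set.InjOn c T := by
  intro a ha b hb hab
  by_contra hne
  rcases hc.comparable a (hTS ha) b (hTS hb) hab with h | h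
  · exact hT ha hb hne h
  · exact hT hb ha (Ne.symm hne) h

theorem exists_mem_eq_of_isAntichain (hc : S.IsChainColoring c k) (hTS : T ⊆ S)
    (hT : IsAntichain (· ≤ ·) (T : Set α)) (hcard : #T = k) {i : ℕ} (hi : i < k) :
    ∃ a ∈ T, c a = i := by
  classical
  have himage : T.image c = range k :=
    eq_of_subset_of_card_le (fun j hj => by
        obtain ⟨a, ha, rfl⟩ := mem_image.1 hj
        exact mem_range.2 (hc.lt a (hTS ha)))
      (by rw [card_range, card_image_of_injOn (hc.injOn_of_isAntichain hTS hT), hcard])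
  exact mem_image.1 (himage ▸ mem_range.2 hi)

theorem exists_top (hc : S.IsChainColoring c S.width) {i : ℕ} (hi : i < S.width) :
    ∃ x, c x = i ∧ (∃ T, S.IsMaximumAntichain T ∧ x ∈ T) ∧
      ∀ T, S.IsMaximumAntichain T → ∀ z ∈ T, c z = i → z ≤ x := by
  classical
  set A := S.filter fun y => c y = i ∧ ∃ T, S.IsMaximumAntichain T ∧ y ∈ T
  have hA : A.Nonempty := by
    obtain ⟨T, hT⟩ := exists_isMaximumAntichain S
    obtain ⟨z, hzT, hz⟩ := hc.exists_mem_eq_of_isAntichain hT.1 hT.2.1 hT.2.2 hi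
    exact ⟨z, mem_filter.2 ⟨hT.1 hzT, hz, T, hT, hzT⟩⟩
  obtain ⟨x, hxA, hxmax⟩ := A.exists_maximal hA
  obtain ⟨hxS, hx, hxT⟩ := mem_filter.1 hxA
  refine ⟨x, hx, hxT, fun T hT z hzT hz => ?_⟩
  have hzA : z ∈ A := mem_filter.2 ⟨hT.1 hzT, hz, T, hT, hzT⟩
  exact (hc.comparable z (hT.1 hzT) x hxS (hz.trans hx.symm)).elim id (hxmax hzA)

theorem not_le_of_top (hc : S.IsChainColoring c S.width) {i j : ℕ} {x y : α}
    (hi : i < S.width) (hij : i ≠ j) (hx : ∀ T, S.IsMaximumAntichain T → ∀ z ∈ T, c z = i → z ≤ x)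
    (hy : c y = j) (hyT : ∃ T, S.IsMaximumAntichain T ∧ y ∈ T) : ¬ x ≤ y := by
  intro hxy
  obtain ⟨T, hT, hyT⟩ := hyT
  obtain ⟨z, hzT, hz⟩ := hc.exists_mem_eq_of_isAntichain hT.1 hT.2.1 hT.2.2 hi
  have hzy : z ≠ y := fun h => hij (hz.symm.trans (h ▸ hy))
  exact hT.2.1 hzT hyT hzy ((hx T hT z hzT hz).trans hxy)

theorem width_lt_of_top (hc : S.IsChainColoring c S.width) {i : ℕ} {x : α} (hi : i < S.width)
    (hx : ∀ T, S.IsMaximumAntichain T → ∀ z ∈ T, c z = i → z ≤ x) (hRS : R ⊆ S)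
    (hR : ∀ z ∈ R, c z = i → ¬ z ≤ x) : R.width < S.width := by
  refine (width_mono hRS).lt_of_ne fun hwidth => ?_
  obtain ⟨T, hT⟩ := exists_isMaximumAntichain R
  have hT' := hT.of_subset hRS hwidth
  obtain ⟨z, hzT, hz⟩ := hc.exists_mem_eq_of_isAntichain hT'.1 hT'.2.1 hT'.2.2 hi
  exact hR z (hT.1 hzT) hz (hx T hT' z hzT hz)

end IsChainColoring

variable {a x : α} {i : ℕ}

theorem exists_isChainColoring_of_top_le [DecidableEq α]
    (ih : ∀ R ⊂ S, ∃ c, R.IsChainColoring c R.width) (haS : a ∈ S)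
    (hc : (S.erase a).IsChainColoring c (S.erase a).width) (hi : i < (S.erase a).width)
    (hx : ∀ T, (S.erase a).IsMaximumAntichain T → ∀ z ∈ T, c z = i → z ≤ x) (hxa : x ≤ a) :
    ∃ c, S.IsChainColoring c S.width := by
  classical
  set K := insert a ((S.erase a).filter fun z => c z = i ∧ z ≤ x)
  have hKS : K ⊆ S := insert_subset haS ((filter_subset _ _).trans (erase_subset a S))
  have hK : IsChain (· ≤ ·) (K : Set α) := by
    rw [coe_insert]
    refine IsChain.insert (fun z hz w hw _ => ?_) (fun z hz _ => Or.inr ?_)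
    · obtain ⟨hzS, hzi, -⟩ := mem_filter.1 hz
      obtain ⟨hwS, hwi, -⟩ := mem_filter.1 hw
      exact hc.comparable z hzS w hwS (hzi.trans hwi.symm)
    · exact (mem_filter.1 hz).2.2.trans hxa
  obtain ⟨c', hc'⟩ := ih (S \ K) (sdiff_ssubset hKS ⟨a, mem_insert_self a _⟩)
  have hsub : S \ K ⊆ S.erase a := fun z hz =>
    mem_erase.2 ⟨fun h => (mem_sdiff.1 hz).2 (h ▸ mem_insert_self a _), (mem_sdiff.1 hz).1⟩
  have hwidth : (S \ K).width < (S.erase a).width :=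
    hc.width_lt_of_top hi hx hsub fun z hz hzi hzx =>
      (mem_sdiff.1 hz).2 (mem_insert_of_mem (mem_filter.2 ⟨hsub hz, hzi, hzx⟩))
  have hle : (S.erase a).width ≤ S.width := width_mono (erase_subset a S)
  exact ⟨_, (hc'.of_sdiff_of_isChain hK).mono (by omega)⟩

/-- `a` together with the tops is an antichain of size `width + 1`. -/
theorem width_erase_lt_of_not_top_le [DecidableEq α] (ha : Maximal (· ∈ S) a)
    (hc : (S.erase a).IsChainColoring c (S.erase a).width) {x : ℕ → α}
    (hxc : ∀ i < (S.erase a).width, c (x i) = i)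
    (hxT : ∀ i < (S.erase a).width, ∃ T, (S.erase a).IsMaximumAntichain T ∧ x i ∈ T)
    (hx : ∀ i < (S.erase a).width,
      ∀ T, (S.erase a).IsMaximumAntichain T → ∀ z ∈ T, c z = i → z ≤ x i)
    (hxa : ∀ i < (S.erase a).width, ¬ x i ≤ a) :
    (S.erase a).width < S.width := by
  set d := (S.erase a).width
  have hxS : ∀ i < d, x i ∈ S.erase a := fun i hi => by
    obtain ⟨T, hT, hxT⟩ := hxT i hi
    exact hT.1 hxT
  set A := insert a ((range d).image x)
  have hA : IsAntichain (· ≤ ·) (A : Set α) := by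
    rw [coe_insert, coe_image]
    refine IsAntichain.insert ?_ ?_ ?_
    · rintro _ ⟨i, hi, rfl⟩ _ ⟨j, hj, rfl⟩ hne
      exact hc.not_le_of_top (mem_range.1 hi) (fun h => hne (h ▸ rfl)) (hx i (mem_range.1 hi))
        (hxc j (mem_range.1 hj)) (hxT j (mem_range.1 hj))
    · rintro _ ⟨i, hi, rfl⟩ -
      exact hxa i (mem_range.1 hi)
    · rintro _ ⟨i, hi, rfl⟩ - hax
      exact hxa i (mem_range.1 hi) (ha.2 (mem_of_mem_erase (hxS i (mem_range.1 hi))) hax)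
  have hAS : A ⊆ S := insert_subset ha.1 fun _ hz => by
    obtain ⟨i, hi, rfl⟩ := mem_image.1 hz
    exact mem_of_mem_erase (hxS i (mem_range.1 hi))
  have hcard : #A = d + 1 := by
    rw [card_insert_of_notMem, card_image_of_injOn, card_range]
    · intro i hi j hj hij
      rw [← hxc i (mem_range.1 hi), ← hxc j (mem_range.1 hj), hij]
    · intro haA
      obtain ⟨i, hi, hxi⟩ := mem_image.1 haA
      exact (mem_erase.1 (hxS i (mem_range.1 hi))).1 hxi
  calc d < #A := by omega
    _ ≤ S.width := card_le_width hAS hA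

/-- **Dilworth's theorem**. -/
theorem exists_isChainColoring_width (S : Finset α) : ∃ c, S.IsChainColoring c S.width := by
  classical
  induction S using Finset.strongInduction with
  | H S ih =>
  obtain rfl | hS := S.eq_empty_or_nonempty
  · exact ⟨0, by simp, by simp⟩
  obtain ⟨a, ha⟩ := S.exists_maximal hS
  obtain ⟨c, hc⟩ := ih (S.erase a) (erase_ssubset ha.1)
  have : Nonempty α := ⟨a⟩
  choose! x hxc hxT hx using fun i (hi : i < (S.erase a).width) => hc.exists_top hi
  by_cases hxa : ∃ i < (S.erase a).width, x i ≤ a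
  · obtain ⟨i, hi, hxa⟩ := hxa
    exact exists_isChainColoring_of_top_le ih ha.1 hc hi (hx i hi) hxa
  · push Not at hxa
    have hwidth := width_erase_lt_of_not_top_le ha hc hxc hxT hx hxa
    have hc' : (S \ {a}).IsChainColoring c (S.erase a).width := by
      rwa [sdiff_singleton_eq_erase]
    exact ⟨_, (hc'.of_sdiff_of_isChain (by rw [coe_singleton]; exact .singleton)).mono hwidth⟩

end Finset

namespace SimpleGraph

variable {V : Type*}

theorem isClique_iff_isAntichain [PartialOrder V] {G : SimpleGraph V}
    (hG : ∀ x y, G.Adj x y ↔ ¬ x ≤ y ∧ ¬ y ≤ x) {s : Set V} :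
    G.IsClique s ↔ IsAntichain (· ≤ ·) s :=
  ⟨fun h _ hx _ hy hxy => ((hG _ _).1 (h hx hy hxy)).1,
    fun h _ hx _ hy hxy => (hG _ _).2 ⟨h hx hy hxy, h hy hx hxy.symm⟩⟩

theorem chromaticNumber_eq_cliqueNum_of_adj_iff [Fintype V] [PartialOrder V] (G : SimpleGraph V)
    (hG : ∀ x y, G.Adj x y ↔ ¬ x ≤ y ∧ ¬ y ≤ x) : G.chromaticNumber = G.cliqueNum := by
  obtain ⟨c, hc⟩ := exists_isChainColoring_width (univ : Finset V)
  have hwidth : (univ : Finset V).width = G.cliqueNum := by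
    apply le_antisymm
    · obtain ⟨T, -, hT, hcard⟩ := exists_isMaximumAntichain (univ : Finset V)
      exact hcard ▸ ((isClique_iff_isAntichain hG).2 hT).card_le_cliqueNum
    · obtain ⟨s, hs⟩ := G.exists_isNClique_cliqueNum
      exact hs.card_eq ▸
        card_le_width (subset_univ s) ((isClique_iff_isAntichain hG).1 hs.isClique)
  have hcol : G.Colorable G.cliqueNum :=
    ⟨Coloring.mk (fun v => ⟨c v, hwidth ▸ hc.lt v (mem_univ v)⟩) fun {v w} hvw hcvw =>
      ((hG v w).1 hvw).elim fun hnvw hnwv =>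
        (hc.comparable v (mem_univ v) w (mem_univ w) (congrArg Fin.val hcvw)).elim hnvw hnwv⟩
  exact le_antisymm hcol.chromaticNumber_le G.cliqueNum_le_chromaticNumber

theorem chromaticNumber_eq_cliqueNum_of_labeling [Fintype V] {β : Type*} [LinearOrder β]
    (G : SimpleGraph V) (f : V → β) (hf : Function.Injective f)
    (hG : ∀ i j k, G.Adj i j → f i < f k → f k < f j → G.Adj i k ∨ G.Adj k j) :
    G.chromaticNumber = G.cliqueNum := by
  let r x y := f x < f y ∧ ¬ G.Adj x y
  have : IsStrictOrder V r :=
    { irrefl x h := lt_irrefl _ h.1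
      trans x y z hxy hyz :=
        ⟨hxy.1.trans hyz.1, fun hxz => (hG x z y hxz hxy.1 hyz.1).elim hxy.2 hyz.2⟩ }
  let : PartialOrder V := partialOrderOfSO r
  refine chromaticNumber_eq_cliqueNum_of_adj_iff G fun x y => ?_
  show G.Adj x y ↔ ¬ (x = y ∨ r x y) ∧ ¬ (y = x ∨ r y x)
  constructor
  · intro h
    refine ⟨?_, ?_⟩ <;> rintro (rfl | ⟨-, hn⟩)
    exacts [G.irrefl h, hn h, G.irrefl h, hn h.symm]
  · rintro ⟨hxy, hyx⟩
    by_contra hadj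
    rcases lt_trichotomy (f x) (f y) with hlt | heq | hlt
    · exact hxy (Or.inr ⟨hlt, hadj⟩)
    · exact hxy (Or.inl (hf heq))
    · exact hyx (Or.inr ⟨hlt, fun h => hadj h.symm⟩)

end SimpleGraph

theorem perfect_of_weaklyClosed {V : Type*} [Fintype V] (G : SimpleGraph V)
    (h : WeaklyClosed G) (W : Set V) :
    (G.induce W).chromaticNumber = ((G.induce W).cliqueNum : ℕ∞) := by
  classical
  obtain ⟨σ, hσ⟩ := h
  exact (G.induce W).chromaticNumber_eq_cliqueNum_of_labeling (fun v => σ v)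
    (σ.injective.comp Subtype.val_injective) fun i j k => hσ i j k
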